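/- arXiv:1707.01649 — 2 statements merged into one kernel-verified Lean document; each statement's English description precedes it below -/
import Mathlib

section
/- Every valuation ring is a splinter: any module-finite ring extension V → S admits a V-linear left inverse (retraction). -/
/-!
Passing to `S ⧸ Q` for a prime `Q` lying over `(0)` reduces to the case where `S` is a domain.
Then `S` is a finite torsion-free module over the Bézout domain `V`, hence flat, hence free since
`V` is local. As `S` is integral over `V`, `𝔪 S ≠ S`, so `1 ∉ 𝔪 S`: some coordinate of `1` in a
basis of `S` is a unit, and the corresponding rescaled coordinate function is the retraction.
-/

universe u

open IsLocalRing

lemma Module.Free.exists_linearMap_apply_eq_one {R M : Type*} [CommRing R] [IsLocalRing R]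
    [AddCommGroup M] [Module R M] [Module.Free R M] {x : M}
    (hx : x ∉ maximalIdeal R • (⊤ : Submodule R M)) : ∃ φ : M →ₗ[R] R, φ x = 1 := by
  contrapose! hx
  let b := Module.Free.chooseBasis R M
  have hcoord : ∀ i, b.repr x i ∈ maximalIdeal R := fun i hi ↦
    hx (hi.unit⁻¹.val • b.coord i) (by simp)
  rw [← b.linearCombination_repr x, Finsupp.linearCombination_apply]
  exact Submodule.finsuppSum_mem _ _ _ _ fun i _ ↦ Submodule.smul_mem_smul (hcoord i) trivial

lemma one_notMem_maximalIdeal_smul_top (R S : Type*) [CommRing R] [IsLocalRing R] [CommRing S]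
    [Algebra R S] [Algebra.IsIntegral R S] [FaithfulSMul R S] :
    (1 : S) ∉ maximalIdeal R • (⊤ : Submodule R S) := by
  rw [Ideal.smul_top_eq_map, Submodule.restrictScalars_mem, ← Ideal.eq_top_iff_one,
    Ideal.map_eq_top_iff _ (FaithfulSMul.algebraMap_injective R S)
      (Algebra.IsIntegral.isIntegral (R := R))]
  exact (maximalIdeal.isMaximal R).ne_top

lemma ValuationRing.free_of_isTorsionFree (V M : Type*) [CommRing V] [IsDomain V]
    [ValuationRing V] [AddCommGroup M] [Module V M] [Module.Finite V M]
    [Module.IsTorsionFree V M] : Module.Free V M := by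
  have : Module.Flat V M := by
    rw [Module.Flat.flat_iff_torsion_eq_bot_of_isBezout,
      ← Submodule.isTorsionFree_iff_torsion_eq_bot]
    infer_instance
  exact Module.free_of_flat_of_isLocalRing

lemma Ideal.Quotient.faithfulSMul_of_liesOver_bot (R S : Type*) [CommRing R] [CommRing S]
    [Algebra R S] (Q : Ideal S) [Q.LiesOver (⊥ : Ideal R)] : FaithfulSMul R (S ⧸ Q) := by
  rw [faithfulSMul_iff_algebraMap_injective, injective_iff_map_eq_zero]
  intro r hr
  rwa [← Ideal.Quotient.mk_algebraMap, Ideal.Quotient.eq_zero_iff_mem,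
    ← Ideal.mem_of_liesOver Q ⊥, Ideal.mem_bot] at hr

namespace ValuationRing

variable {V : Type*} [CommRing V] [IsDomain V] [ValuationRing V]

lemma exists_linearMap_apply_one_eq_one_of_isDomain (S : Type*) [CommRing S] [IsDomain S]
    [Algebra V S] [Module.Finite V S] [FaithfulSMul V S] : ∃ g : S →ₗ[V] V, g 1 = 1 :=
  have := free_of_isTorsionFree V S
  Module.Free.exists_linearMap_apply_eq_one (one_notMem_maximalIdeal_smul_top V S)

lemma exists_linearMap_apply_one_eq_one (S : Type*) [CommRing S] [Algebra V S]
    [Module.Finite V S] [FaithfulSMul V S] : ∃ g : S →ₗ[V] V, g 1 = 1 := by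
  obtain ⟨Q, _, _⟩ := Ideal.nonempty_primesOver (⊥ : Ideal V) (S := S)
  have := Ideal.Quotient.faithfulSMul_of_liesOver_bot V S Q
  obtain ⟨g, hg⟩ := exists_linearMap_apply_one_eq_one_of_isDomain (V := V) (S ⧸ Q)
  exact ⟨g ∘ₗ (Ideal.Quotient.mkₐ V Q).toLinearMap, hg⟩

end ValuationRing

theorem valuationRing_is_splinter
    (V : Type u) [CommRing V] [IsDomain V] [ValuationRing V]
    (S : Type u) [CommRing S] (f : V →+* S) (hf : Function.Injective f) :
    letI : Module V S := f.toModule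
    Module.Finite V S → ∃ g : S →ₗ[V] V, ∀ v : V, g (f v) = v := by
  intro _
  let _ : Algebra V S := f.toAlgebra
  have : FaithfulSMul V S := (faithfulSMul_iff_algebraMap_injective V S).mpr hf
  obtain ⟨g, hg⟩ := ValuationRing.exists_linearMap_apply_one_eq_one (V := V) S
  refine ⟨g, fun v ↦ ?_⟩
  rw [show f v = v • 1 from Algebra.algebraMap_eq_smul_one v, map_smul, hg, smul_eq_mul, mul_one]
end

section
/- Let V be a valuation ring of characteristic p > 0 whose value group Γ satisfies Γ = pΓ. Then the maximal ideal m of V satisfies m^{[p]} = m, and consequently any Frobenius splitting of V induces a Frobenius splitting of the residue field κ = V/m. -/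
/-!
If `v x = δ ^ p` with `δ < 1`, choose `y` with `v y = δ`; then `x = u * y ^ p` with `u` a unit,
so the maximal ideal is generated by `p`-th powers of its elements. A `p`-linear map `φ` sends
`c * y ^ p` to `y * φ c`, hence preserves the maximal ideal and descends to the residue field.
-/

namespace Ideal

variable {R : Type*}

section Frobenius

variable [CommSemiring R] {p : ℕ} [ExpChar R p]

theorem map_frobenius_eq_self {I : Ideal R} (h : ∀ x ∈ I, ∃ u, ∃ y ∈ I, x = u * y ^ p) :
    I.map (frobenius R p) = I := by
  refine le_antisymm (map_le_iff_le_comap.2 fun y hy ↦ ?_) fun x hx ↦ ?_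
  · exact I.pow_mem_of_mem hy p (expChar_pos R p)
  · obtain ⟨u, y, hy, rfl⟩ := h x hx
    exact mul_mem_left _ u (mem_map_of_mem _ hy)

theorem apply_mem_of_mem_map_frobenius {φ : R →+ R} (hφ : ∀ a b, φ (a ^ p * b) = a * φ b)
    {I : Ideal R} {x : R} (hx : x ∈ I.map (frobenius R p)) : φ x ∈ I := by
  suffices ∀ c, φ (c * x) ∈ I by simpa using this 1
  induction hx using Submodule.span_induction with
  | mem z hz =>
    obtain ⟨y, hy, rfl⟩ := hz
    intro c
    rw [frobenius_def, mul_comm, hφ]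
    exact I.mul_mem_right _ hy
  | zero => simp
  | add a b _ _ ha hb => exact fun c ↦ by rw [mul_add, map_add]; exact I.add_mem (ha c) (hb c)
  | smul d z _ hz => exact fun c ↦ by rw [smul_eq_mul, ← mul_assoc]; exact hz (c * d)

end Frobenius

variable [CommRing R]

theorem Quotient.exists_addMonoidHom_mk_comp (I : Ideal R) (φ : R →+ R)
    (hI : ∀ x ∈ I, φ x ∈ I) : ∃ ψ : R ⧸ I →+ R ⧸ I, ∀ x, ψ (mk I x) = mk I (φ x) :=
  ⟨QuotientAddGroup.map I.toAddSubgroup I.toAddSubgroup φ hI, fun _ ↦ rfl⟩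

theorem Quotient.exists_frobeniusSplitting (I : Ideal R) {p : ℕ} {φ : R →+ R}
    (hφ : ∀ a b, φ (a ^ p * b) = a * φ b) (hφ1 : φ 1 = 1) (hI : ∀ x ∈ I, φ x ∈ I) :
    ∃ ψ : R ⧸ I →+ R ⧸ I,
      (∀ a b, ψ (a ^ p * b) = a * ψ b) ∧ ψ 1 = 1 ∧ ∀ x, ψ (mk I x) = mk I (φ x) := by
  obtain ⟨ψ, hψ⟩ := exists_addMonoidHom_mk_comp I φ hI
  refine ⟨ψ, fun a b ↦ ?_, by rw [← map_one (mk I), hψ, hφ1, map_one], hψ⟩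
  obtain ⟨a, rfl⟩ := mk_surjective a
  obtain ⟨b, rfl⟩ := mk_surjective b
  rw [← map_pow, ← map_mul, hψ, hψ, hφ, map_mul]

end Ideal

open IsLocalRing

namespace Valuation

variable {K Γ₀ : Type*} [Field K] [LinearOrderedCommGroupWithZero Γ₀] {v : Valuation K Γ₀}

theorem mem_maximalIdeal_integer_iff {x : v.integer} : x ∈ maximalIdeal v.integer ↔ v x < 1 := by
  rw [mem_maximalIdeal, mem_nonunits_iff, Integer.not_isUnit_iff_valuation_lt_one]

theorem exists_eq_mul_pow_of_mem_maximalIdeal_integer (hsurj : Function.Surjective v) {n : ℕ}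
    (hdiv : ∀ γ : Γ₀ˣ, ∃ δ : Γ₀ˣ, δ ^ n = γ) {x : v.integer} (hx : x ∈ maximalIdeal v.integer) :
    ∃ u : v.integer, ∃ y ∈ maximalIdeal v.integer, x = u * y ^ n := by
  rcases eq_or_ne x 0 with rfl | hx0
  · exact ⟨0, 0, zero_mem _, (zero_mul _).symm⟩
  have hvx : v (x : K) ≠ 0 := by simpa using hx0
  obtain ⟨δ, hδ⟩ := hdiv (Units.mk0 _ hvx)
  have hδn : (δ : Γ₀) ^ n = v x := by rw [← Units.val_pow_eq_pow_val, hδ, Units.val_mk0]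
  have hδ1 : (δ : Γ₀) < 1 := lt_of_not_ge fun h ↦
    (one_le_pow_of_one_le' h n).not_gt (hδn ▸ mem_maximalIdeal_integer_iff.1 hx)
  obtain ⟨y, hy⟩ := hsurj δ
  have hyn : y ^ n ≠ 0 := pow_ne_zero n (by rintro rfl; exact δ.ne_zero (hy ▸ v.map_zero))
  have hy1 : v y < 1 := hy ▸ hδ1
  have hu : v ((x : K) / y ^ n) = 1 := by rw [map_div₀, map_pow, hy, hδn, div_self hvx]
  refine ⟨⟨x / y ^ n, hu.le⟩, ⟨y, hy1.le⟩, mem_maximalIdeal_integer_iff.2 hy1, ?_⟩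
  ext
  simp [div_mul_cancel₀ _ hyn]

end Valuation

universe u

theorem frobenius_power_maximalIdeal_and_induced_residue_splitting
    (K : Type u) [Field K] (p : ℕ) [Fact p.Prime] [CharP K p]
    (Γ₀ : Type u) [LinearOrderedCommGroupWithZero Γ₀]
    (v : Valuation K Γ₀) (hsurj : Function.Surjective v)
    (hdiv : ∀ γ : Γ₀ˣ, ∃ δ : Γ₀ˣ, δ ^ p = γ) :
    Ideal.map (frobenius v.integer p) (IsLocalRing.maximalIdeal v.integer) =
        IsLocalRing.maximalIdeal v.integer ∧
      ∀ φ : v.integer →+ v.integer,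
        (∀ a b : v.integer, φ (a ^ p * b) = a * φ b) → φ 1 = 1 →
          ∃ ψ : IsLocalRing.ResidueField v.integer →+ IsLocalRing.ResidueField v.integer,
            (∀ a b : IsLocalRing.ResidueField v.integer, ψ (a ^ p * b) = a * ψ b) ∧
              ψ 1 = 1 ∧
              ∀ x : v.integer,
                ψ (IsLocalRing.residue v.integer x) = IsLocalRing.residue v.integer (φ x) := by
  have hm : (maximalIdeal v.integer).map (frobenius v.integer p) = maximalIdeal v.integer :=
    Ideal.map_frobenius_eq_self fun _ ↦ v.exists_eq_mul_pow_of_mem_maximalIdeal_integer hsurj hdiv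
  refine ⟨hm, fun φ hφ hφ1 ↦ ?_⟩
  exact Ideal.Quotient.exists_frobeniusSplitting _ hφ hφ1
    fun x hx ↦ Ideal.apply_mem_of_mem_map_frobenius hφ (hm.symm ▸ hx)
end
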